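/- arXiv:nlin/0103010 — 3 statements merged into one kernel-verified Lean document; each statement's English description precedes it below -/
import Mathlib

section
/- The 3×3 matrix L₀ over A with rows (h, −v⁻, 2X⁻), (v⁺, 0, v⁻), (2X⁺, v⁺, −h) satisfies the cubic characteristic equation L₀³ + 2L₀² − (c₂ − 1)·L₀ − c₂·I₃ = 0 in the matrix ring M₃(A), where c₂·M denotes entrywise left multiplication by c₂ and I₃ is the identity matrix. -/
/-!
Writing `C = c₂ • 1`, the cubic factors as `(L₀² + L₀ - C) * (L₀ + 1)`, and `L₀² + L₀ - C` is
the rank-one matrix `u wᵀ` with `u = (v⁻, [v⁻, v⁺], -v⁺)` and `w = (v⁺, [v⁺, v⁻], v⁻)`, whose row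
`w` is a left eigenvector of `L₀` for the eigenvalue `-1`; hence the product vanishes.

Both matrix identities are checked entrywise after eliminating `h = -(v⁺v⁻ + v⁻v⁺)`, `X⁺ = v⁺²`
and `X⁻ = -v⁻²`. In the odd generators `[X⁺, v⁻] = v⁺` and `[X⁻, v⁺] = v⁻` become
`v⁺v⁺v⁻ = v⁻v⁺v⁺ + v⁺` and `v⁺v⁻v⁻ = v⁻v⁻v⁺ + v⁻`, a confluent rewriting system, so normal
ordering with these two rules decides every entry.
-/

open Matrix

section Cubic

variable {n A : Type*} [Ring A] [Fintype n] [DecidableEq n]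

theorem Matrix.cubic_eq_mul (L : Matrix n n A) (c : A) :
    L ^ 3 + 2 • L ^ 2 - (c - 1) • L - c • 1 = (L ^ 2 + L - c • 1) * (L + 1) := by
  simp only [sub_mul, add_mul, mul_add, smul_mul, one_mul, mul_one, sub_smul, one_smul, pow_succ,
    pow_zero]
  abel

theorem Matrix.vecMulVec_mul_add_one_eq_zero {L : Matrix n n A} (u : n → A) {w : n → A}
    (hw : w ᵥ* L = -w) : vecMulVec u w * (L + 1) = 0 := by
  rw [vecMulVec_mul, vecMul_add, vecMul_one, hw, neg_add_cancel, vecMulVec_zero]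

end Cubic

namespace Osp12

variable {A : Type*} [Ring A]

def lOperator (h Xp Xm vp vm : A) : Matrix (Fin 3) (Fin 3) A :=
  !![h, -vm, 2 • Xm; vp, 0, vm; 2 • Xp, vp, -h]

def casimir (h Xp Xm vp vm : A) : A :=
  h * h - h + 4 • (Xp * Xm) + 2 • (vp * vm)

variable {h Xp Xm vp vm : A}

theorem vp_mul_vp_mul_vm (hXp : vp * vp = Xp) (hXpvm : Xp * vm - vm * Xp = vp)
    (t : A) : vp * (vp * (vm * t)) = vm * (vp * (vp * t)) + vp * t := by
  subst hXp
  linear_combination (norm := noncomm_ring) hXpvm * t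

theorem vp_mul_vm_mul_vm (hXm : vm * vm = -Xm) (hXmvp : Xm * vp - vp * Xm = vm)
    (t : A) : vp * (vm * (vm * t)) = vm * (vm * (vp * t)) + vm * t := by
  obtain rfl : Xm = -(vm * vm) := neg_eq_iff_eq_neg.mp hXm.symm
  linear_combination (norm := noncomm_ring) hXmvp * t

theorem vecMul_lOperator (hXp : vp * vp = Xp) (hXm : vm * vm = -Xm)
    (hh : vp * vm + vm * vp = -h) (hXpvm : Xp * vm - vm * Xp = vp)
    (hXmvp : Xm * vp - vp * Xm = vm) :
    ![vp, vp * vm - vm * vp, vm] ᵥ* lOperator h Xp Xm vp vm = -![vp, vp * vm - vm * vp, vm] := by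
  have r₁ := vp_mul_vp_mul_vm hXp hXpvm
  have r₂ := vp_mul_vm_mul_vm hXm hXmvp
  have r₁' := by simpa using r₁ 1
  have r₂' := by simpa using r₂ 1
  obtain rfl : Xm = -(vm * vm) := neg_eq_iff_eq_neg.mp hXm.symm
  obtain rfl : h = -(vp * vm + vm * vp) := neg_eq_iff_eq_neg.mp hh.symm
  subst hXp
  ext j
  fin_cases j <;>
    simp [-nsmul_eq_mul, lOperator, vecMul, dotProduct, Fin.sum_univ_three, mul_add, sub_mul,
      mul_assoc, r₁', r₂'] <;>
    abel

theorem lOperator_sq_add_self_sub_casimir (hXp : vp * vp = Xp) (hXm : vm * vm = -Xm)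
    (hh : vp * vm + vm * vp = -h) (hXpvm : Xp * vm - vm * Xp = vp)
    (hXmvp : Xm * vp - vp * Xm = vm) :
    lOperator h Xp Xm vp vm ^ 2 + lOperator h Xp Xm vp vm - casimir h Xp Xm vp vm • 1 =
      vecMulVec ![vm, vm * vp - vp * vm, -vp] ![vp, vp * vm - vm * vp, vm] := by
  have r₁ := vp_mul_vp_mul_vm hXp hXpvm
  have r₂ := vp_mul_vm_mul_vm hXm hXmvp
  have r₁' := by simpa using r₁ 1
  have r₂' := by simpa using r₂ 1
  obtain rfl : Xm = -(vm * vm) := neg_eq_iff_eq_neg.mp hXm.symm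
  obtain rfl : h = -(vp * vm + vm * vp) := neg_eq_iff_eq_neg.mp hh.symm
  subst hXp
  ext i j
  fin_cases i <;> fin_cases j <;>
    simp [-nsmul_eq_mul, lOperator, casimir, sq, vecMulVec_apply, mul_add, add_mul, mul_sub,
      sub_mul, mul_assoc, r₁, r₂, r₁', r₂'] <;>
    abel

end Osp12

theorem osp12_L0_cubic_general {A : Type*} [Ring A] [Algebra ℂ A]
    (h Xp Xm vp vm : A)
    (rel_vpvm : vp * vm + vm * vp = -h)
    (rel_Xmvp : Xm * vp - vp * Xm = vm)
    (rel_Xpvm : Xp * vm - vm * Xp = vp)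
    (rel_vpvp : vp * vp = Xp)
    (rel_vmvm : vm * vm = -Xm)
    (c2 : A) (hc2 : c2 = h * h - h + (4:ℂ) • (Xp * Xm) + (2:ℂ) • (vp * vm))
    (L0 : Matrix (Fin 3) (Fin 3) A)
    (hL0 : L0 = !![h, -vm, (2:ℂ) • Xm; vp, 0, vm; (2:ℂ) • Xp, vp, -h]) :
    L0 ^ 3 + (2:ℂ) • L0 ^ 2 - (c2 - 1) • L0 - c2 • (1 : Matrix (Fin 3) (Fin 3) A) = 0 := by
  simp only [ofNat_smul_eq_nsmul] at hc2 hL0 ⊢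
  subst hc2 hL0
  have hw := Osp12.vecMul_lOperator rel_vpvp rel_vmvm rel_vpvm rel_Xpvm rel_Xmvp
  have hN := Osp12.lOperator_sq_add_self_sub_casimir rel_vpvp rel_vmvm rel_vpvm rel_Xpvm rel_Xmvp
  rw [Matrix.cubic_eq_mul]
  exact hN ▸ vecMulVec_mul_add_one_eq_zero _ hw

/-- the L-operator matrix of osp(1|2) satisfies the cubic
characteristic equation L₀³ + 2L₀² − (c₂ − 1)·L₀ − c₂·I₃ = 0. -/
theorem osp12_L0_cubic {A : Type*} [Ring A] [Algebra ℂ A]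
    (h Xp Xm vp vm : A)
    (rel_hXp : h * Xp - Xp * h = (2:ℂ) • Xp)
    (rel_hXm : h * Xm - Xm * h = (-2:ℂ) • Xm)
    (rel_XpXm : Xp * Xm - Xm * Xp = h)
    (rel_hvp : h * vp - vp * h = vp)
    (rel_hvm : h * vm - vm * h = -vm)
    (rel_vpvm : vp * vm + vm * vp = -h)
    (rel_Xmvp : Xm * vp - vp * Xm = vm)
    (rel_Xpvm : Xp * vm - vm * Xp = vp)
    (rel_vpvp : vp * vp = Xp)
    (rel_vmvm : vm * vm = -Xm)
    (rel_Xpvp : Xp * vp = vp * Xp)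
    (rel_Xmvm : Xm * vm = vm * Xm)
    (c2 : A) (hc2 : c2 = h * h - h + (4:ℂ) • (Xp * Xm) + (2:ℂ) • (vp * vm))
    (L0 : Matrix (Fin 3) (Fin 3) A)
    (hL0 : L0 = !![h, -vm, (2:ℂ) • Xm; vp, 0, vm; (2:ℂ) • Xp, vp, -h]) :
    L0 ^ 3 + (2:ℂ) • L0 ^ 2 - (c2 - 1) • L0 - c2 • (1 : Matrix (Fin 3) (Fin 3) A) = 0 :=
  osp12_L0_cubic_general h Xp Xm vp vm rel_vpvm rel_Xmvp rel_Xpvm rel_vpvp rel_vmvm c2 hc2 L0 hL0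
end

section
/- For every M ≥ 2, every pairwise distinct μ₁,…,μ_M ∈ D, and every 1 ≤ k < M, the creation operators are antisymmetric under transposition of adjacent arguments: B_M(μ₁,…,μ_k, μ_{k+1},…,μ_M) = −B_M(μ₁,…,μ_{k+1}, μ_k,…,μ_M). -/
/-!
Write the recursion as `B (μ :: l) = v μ * B l + 2 • (X μ * C_μ B l)`, where
`C_w F l = ∑ᵢ (-1)ⁱ w(lᵢ) • F (l without lᵢ)` is an alternating contraction and `C_μ` has
weight `w = (μ - ·)⁻¹`. Two contractions anticommute, `C_a (C_b G) = -C_b (C_a G)`, by induction on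
the list. Expanding `B (x :: y :: l)` twice, each term changes sign under `x ↔ y`: the `v v` and
`X` terms together by the relation for `v x v y + v y v x`, the mixed `v X` terms because `X` and
`v` commute, and the double contractions by anticommutation. A swap further inside the list
follows by induction on its position: contracting away `x` or `y` from `… x y …` and from
`… y x …` gives the same list at neighbouring positions, hence opposite signs `(-1)ⁱ`.
-/

/-- The creation operators B_M of the osp(1|2) Gaudin model, defined by the
recurrence B_M(μ₁,…,μ_M) = v⁺(μ₁)B_{M−1}(μ₂,…,μ_M)
+ 2X⁺(μ₁)Σ_{j=2}^{M} ((−1)^j/(μ₁−μ_j)) B_{M−2}^{(j)}(μ₂,…,μ_M). -/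
noncomputable def Bop {A : Type*} [Ring A] [Algebra ℂ A] (X v : ℂ → A) : List ℂ → A
  | [] => 1
  | μ :: rest => v μ * Bop X v rest +
      (2:ℂ) • (X μ * ∑ i : Fin rest.length,
        (((-1:ℂ)^(i:ℕ) / (μ - rest.get i)) • Bop X v (rest.eraseIdx i)))
termination_by l => l.length
decreasing_by
  all_goals simp [List.length_eraseIdx] <;> omega

/-- Remove the entries at (0-based) positions `i` and `j` from the list `l`. -/
def erase2 (l : List ℂ) (i j : ℕ) : List ℂ := (l.eraseIdx (max i j)).eraseIdx (min i j)

/-- Θ(i − j) for the Heaviside function Θ (Θ(x) = 1 for x > 0, Θ(x) = 0 for x ≤ 0). -/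
def theta (i j : ℕ) : ℕ := if j < i then 1 else 0

section AlternatingContraction

open scoped List

variable {α R M : Type*} [CommRing R] [AddCommGroup M] [Module R M]

def alternatingContraction (w : α → R) (F : List α → M) (l : List α) : M :=
  ∑ i : Fin l.length, ((-1) ^ (i : ℕ) * w l[i]) • F (l.eraseIdx i)

variable (w : α → R)

@[simp]
theorem alternatingContraction_nil (F : List α → M) : alternatingContraction w F [] = 0 := by
  simp [alternatingContraction]

theorem alternatingContraction_cons (F : List α → M) (a : α) (l : List α) :
    alternatingContraction w F (a :: l) =
      w a • F l - alternatingContraction w (fun l' => F (a :: l')) l := by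
  simp [alternatingContraction, Fin.sum_univ_succ, pow_succ, sub_eq_add_neg,
    Finset.sum_neg_distrib]

theorem alternatingContraction_congr {F G : List α → M} {l : List α}
    (h : ∀ l', l' <+ l → F l' = G l') :
    alternatingContraction w F l = alternatingContraction w G l :=
  Finset.sum_congr rfl fun i _ => by rw [h _ (l.eraseIdx_sublist i)]

theorem alternatingContraction_add (F G : List α → M) (l : List α) :
    alternatingContraction w (fun l' => F l' + G l') l =
      alternatingContraction w F l + alternatingContraction w G l := by
  simp [alternatingContraction, smul_add, Finset.sum_add_distrib]

theorem alternatingContraction_sub (F G : List α → M) (l : List α) :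
    alternatingContraction w (fun l' => F l' - G l') l =
      alternatingContraction w F l - alternatingContraction w G l := by
  simp [alternatingContraction, smul_sub, Finset.sum_sub_distrib]

theorem alternatingContraction_neg (F : List α → M) (l : List α) :
    alternatingContraction w (fun l' => -F l') l = -alternatingContraction w F l := by
  simp [alternatingContraction, Finset.sum_neg_distrib]

theorem alternatingContraction_smul (c : R) (F : List α → M) (l : List α) :
    alternatingContraction w (fun l' => c • F l') l = c • alternatingContraction w F l := by
  simp [alternatingContraction, Finset.smul_sum, smul_comm c]

theorem alternatingContraction_mul_left {A : Type*} [Ring A] [Algebra R A] (a : A)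
    (F : List α → A) (l : List α) :
    alternatingContraction w (fun l' => a * F l') l = a * alternatingContraction w F l := by
  simp [alternatingContraction, Finset.mul_sum]

theorem alternatingContraction_anticomm (a b : α → R) (G : List α → M) (l : List α) :
    alternatingContraction a (alternatingContraction b G) l =
      -alternatingContraction b (alternatingContraction a G) l := by
  induction l generalizing G with
  | nil => simp
  | cons c l ih =>
    simp only [alternatingContraction_cons, alternatingContraction_sub,
      alternatingContraction_smul, ih (fun l' => G (c :: l'))]
    abel

theorem alternatingContraction_append_swap {F : List α → M} {t l : List α} {x y : α}
    (hF : ∀ t' l', t' <+ t → l' <+ l → F (t' ++ x :: y :: l') = -F (t' ++ y :: x :: l')) :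
    alternatingContraction w F (t ++ x :: y :: l) =
      -alternatingContraction w F (t ++ y :: x :: l) := by
  induction t generalizing F with
  | nil =>
    have hxy : alternatingContraction w (fun l' => F (x :: y :: l')) l =
        -alternatingContraction w (fun l' => F (y :: x :: l')) l := by
      rw [← alternatingContraction_neg]
      exact alternatingContraction_congr w fun l' hl' => hF [] l' List.Sublist.slnil hl'
    simp only [List.nil_append, alternatingContraction_cons, hxy]
    abel
  | cons a t ih =>
    simp only [List.cons_append, alternatingContraction_cons]
    rw [hF t l (List.sublist_cons_self a t) (List.Sublist.refl l), smul_neg,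
      ih fun t' l' ht hl => hF (a :: t') l' (ht.cons_cons a) hl]
    abel

end AlternatingContraction

section Bop

open scoped List

variable {A : Type*} [Ring A] [Algebra ℂ A] (X v : ℂ → A)

theorem Bop_cons (μ : ℂ) (l : List ℂ) :
    Bop X v (μ :: l) = v μ * Bop X v l +
      (2 : ℂ) • (X μ * alternatingContraction (fun ν => (μ - ν)⁻¹) (Bop X v) l) := by
  rw [Bop]
  simp [alternatingContraction, div_eq_mul_inv]

theorem Bop_cons_cons (x y : ℂ) (l : List ℂ) :
    Bop X v (x :: y :: l) = v x * v y * Bop X v l + (2 * (x - y)⁻¹) • (X x * Bop X v l)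
      + (2 : ℂ) • (v x * X y * alternatingContraction (fun ν => (y - ν)⁻¹) (Bop X v) l)
      - (2 : ℂ) • (X x * v y * alternatingContraction (fun ν => (x - ν)⁻¹) (Bop X v) l)
      - (4 : ℂ) • (X x * X y * alternatingContraction (fun ν => (x - ν)⁻¹)
          (alternatingContraction (fun ν => (y - ν)⁻¹) (Bop X v)) l) := by
  simp only [Bop_cons X v x, Bop_cons X v y, alternatingContraction_cons,
    alternatingContraction_add, alternatingContraction_smul, alternatingContraction_mul_left,
    mul_add, mul_sub, mul_smul_comm, mul_assoc]
  module

theorem Bop_swap_head {x y : ℂ} (hXX : X x * X y = X y * X x) (hXv : X x * v y = v y * X x)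
    (hvX : v x * X y = X y * v x) (hvv : v x * v y + v y * v x = (-2 / (x - y)) • (X x - X y))
    (l : List ℂ) : Bop X v (x :: y :: l) = -Bop X v (y :: x :: l) := by
  have hvvB : v x * v y * Bop X v l + v y * v x * Bop X v l =
      (-2 / (x - y)) • (X x * Bop X v l - X y * Bop X v l) := by
    rw [← add_mul, hvv, smul_mul_assoc, sub_mul]
  rw [eq_neg_iff_add_eq_zero, Bop_cons_cons, Bop_cons_cons, hXX, hXv, hvX,
    alternatingContraction_anticomm (fun ν => (y - ν)⁻¹), mul_neg,
    ← neg_sub x y, inv_neg, mul_neg]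
  linear_combination (norm := module) hvvB

theorem Bop_cons_append_swap (μ : ℂ) {t l : List ℂ} {x y : ℂ}
    (hswap : ∀ t' l', t' <+ t → l' <+ l →
      Bop X v (t' ++ x :: y :: l') = -Bop X v (t' ++ y :: x :: l')) :
    Bop X v (μ :: t ++ x :: y :: l) = -Bop X v (μ :: t ++ y :: x :: l) := by
  simp only [List.cons_append, Bop_cons]
  rw [hswap t l (List.Sublist.refl t) (List.Sublist.refl l),
    alternatingContraction_append_swap _ hswap, mul_neg, mul_neg, smul_neg, neg_add]

end Bop

/-- the creation operators are antisymmetric under transposition of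
adjacent arguments. -/
theorem Bop_antisymm_adjacent {A : Type*} [Ring A] [Algebra ℂ A] (D : Set ℂ)
    (X v : ℂ → A)
    (hXX : ∀ l ∈ D, ∀ m ∈ D, l ≠ m → X l * X m = X m * X l)
    (hXv : ∀ l ∈ D, ∀ m ∈ D, l ≠ m → X l * v m = v m * X l)
    (hvv : ∀ l ∈ D, ∀ m ∈ D, l ≠ m →
      v l * v m + v m * v l = (-2/(l - m)) • (X l - X m))
    (l₁ l₂ : List ℂ) (x y : ℂ)
    (hdist : (l₁ ++ x :: y :: l₂).Pairwise (· ≠ ·))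
    (hD : ∀ μ ∈ l₁ ++ x :: y :: l₂, μ ∈ D) :
    Bop X v (l₁ ++ x :: y :: l₂) = - Bop X v (l₁ ++ y :: x :: l₂) := by
  induction hn : l₁.length + l₂.length using Nat.strong_induction_on generalizing l₁ l₂ with
  | _ n ih =>
  cases l₁ with
  | nil =>
    have hx : x ∈ D := hD x (by simp)
    have hy : y ∈ D := hD y (by simp)
    have hxy : x ≠ y := List.rel_of_pairwise_cons hdist (by simp)
    exact Bop_swap_head X v (hXX x hx y hy hxy) (hXv x hx y hy hxy) (hXv y hy x hx hxy.symm).symm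
      (hvv x hx y hy hxy) l₂
  | cons μ t =>
    refine Bop_cons_append_swap X v μ fun t' l' ht hl => ?_
    have hsub : (t' ++ x :: y :: l').Sublist (μ :: t ++ x :: y :: l₂) :=
      (ht.append ((hl.cons_cons y).cons_cons x)).cons μ
    have hlen : t'.length + l'.length < n := by
      simp only [List.length_cons] at hn
      have := ht.length_le
      have := hl.length_le
      omega
    exact ih _ hlen t' l' (hdist.sublist hsub) (fun ν hν => hD ν (hsub.subset hν)) rfl
end

section
/- For every M ≥ 1 and pairwise distinct μ₁,…,μ_M ∈ D, the creation operators satisfy the alternative (right-sided) recurrence relation B_M(μ₁,…,μ_M) = B_{M−1}(μ₁,…,μ_{M−1}) v⁺(μ_M) + 2 Σ_{j=1}^{M−1} (−1)^{M−j−1} (X⁺(μ_j)/(μ_j − μ_M)) B_{M−2}^{(j)}(μ₁,…,μ_{M−1}), where B₋₁ = 0. -/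
theorem Bop_cons_s3 {A : Type*} [Ring A] [Algebra ℂ A] (X v : ℂ → A) (μ : ℂ) (rest : List ℂ) :
    Bop X v (μ :: rest) = v μ * Bop X v rest +
      (2:ℂ) • (X μ * ∑ i ∈ Finset.range rest.length,
        (((-1:ℂ)^i / (μ - rest.getD i 0)) • Bop X v (rest.eraseIdx i))) := by
  rw [Bop]
  have : ∑ i : Fin rest.length, (((-1:ℂ)^(i:ℕ) / (μ - rest.get i)) • Bop X v (rest.eraseIdx i))
      = ∑ i ∈ Finset.range rest.length, (((-1:ℂ)^i / (μ - rest.getD i 0)) • Bop X v (rest.eraseIdx i)) := by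
    rw [← Fin.sum_univ_eq_sum_range (fun i => (((-1:ℂ)^i / (μ - rest.getD i 0)) • Bop X v (rest.eraseIdx i)))]
    refine Finset.sum_congr rfl fun i _ => ?_
    rw [List.getD_eq_getElem _ _ i.isLt, List.get_eq_getElem]
  rw [this]

theorem getD_append_lt (l l' : List ℂ) (i : ℕ) (h : i < l.length) :
    (l ++ l').getD i 0 = l.getD i 0 := by
  simp [List.getD_eq_getElem?_getD, List.getElem?_append_left h]

theorem getD_append_len (l : List ℂ) (x : ℂ) : (l ++ [x]).getD l.length 0 = x := by
  simp [List.getD_eq_getElem?_getD]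

theorem eraseIdx_append_len (l : List ℂ) (x : ℂ) : (l ++ [x]).eraseIdx l.length = l := by
  rw [List.eraseIdx_append_of_length_le (le_refl _)]
  simp

theorem getD_mem' (l : List ℂ) (i : ℕ) (h : i < l.length) : l.getD i 0 ∈ l := by
  rw [List.getD_eq_getElem _ _ h]; exact List.getElem_mem h

theorem getD_eraseIdx' (l : List ℂ) (i k : ℕ) (hi : i < l.length) (hk : k < l.length - 1) :
    (l.eraseIdx i).getD k 0 = if k < i then l.getD k 0 else l.getD (k+1) 0 := by
  have h1 : k < (l.eraseIdx i).length := by rw [List.length_eraseIdx_of_lt hi]; omega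
  rw [List.getD_eq_getElem _ _ h1, List.getElem_eraseIdx]
  split <;> rw [List.getD_eq_getElem]

theorem eraseIdx_eraseIdx' {α : Type*} : ∀ (l : List α) (i j : ℕ), i ≤ j →
    (l.eraseIdx (j+1)).eraseIdx i = (l.eraseIdx i).eraseIdx j
  | [], _, _, _ => by simp
  | a :: t, 0, j, _ => by simp
  | a :: t, (i+1), (j+1), h => by
      simp only [List.eraseIdx_cons_succ, List.cons.injEq, true_and]
      exact eraseIdx_eraseIdx' t i j (by omega)

-- the combinatorial reindexing (involution) lemma, generic form
theorem sum_invol {M : Type*} [AddCommMonoid M] (n : ℕ) (f g : ℕ → ℕ → M)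
    (h : ∀ i < n, ∀ k < n - 1,
      f i k = g (if k < i then k else k + 1) (if k < i then i - 1 else i)) :
    ∑ i ∈ Finset.range n, ∑ k ∈ Finset.range (n-1), f i k
      = ∑ i ∈ Finset.range n, ∑ k ∈ Finset.range (n-1), g i k := by
  rw [← Finset.sum_product', ← Finset.sum_product']
  refine Finset.sum_nbij'
    (fun p => ((if p.2 < p.1 then p.2 else p.2 + 1), (if p.2 < p.1 then p.1 - 1 else p.1)))
    (fun p => ((if p.2 < p.1 then p.2 else p.2 + 1), (if p.2 < p.1 then p.1 - 1 else p.1)))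
    ?_ ?_ ?_ ?_ ?_
  · rintro ⟨i, k⟩ hp
    simp only [Finset.mem_product, Finset.mem_range] at hp ⊢
    split_ifs <;> omega
  · rintro ⟨i, k⟩ hp
    simp only [Finset.mem_product, Finset.mem_range] at hp ⊢
    split_ifs <;> omega
  · rintro ⟨i, k⟩ hp
    simp only [Prod.mk.injEq]
    constructor <;> split_ifs <;> omega
  · rintro ⟨i, k⟩ hp
    simp only [Prod.mk.injEq]
    constructor <;> split_ifs <;> omega
  · rintro ⟨i, k⟩ hp
    simp only [Finset.mem_product, Finset.mem_range] at hp
    exact h i hp.1 k hp.2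

theorem Bop_aux {A : Type*} [Ring A] [Algebra ℂ A] (D : Set ℂ) (X v : ℂ → A)
    (hXX : ∀ l ∈ D, ∀ m ∈ D, l ≠ m → X l * X m = X m * X l)
    (hXv : ∀ l ∈ D, ∀ m ∈ D, l ≠ m → X l * v m = v m * X l)
    (l : List ℂ) (μ : ℂ)
    (hdist : (l ++ [μ]).Pairwise (· ≠ ·))
    (hD : ∀ ν ∈ l ++ [μ], ν ∈ D) :
    Bop X v (l ++ [μ]) = Bop X v l * v μ +
      (2:ℂ) • ∑ j ∈ Finset.range l.length,
        (((-1:ℂ)^(l.length - 1 - j) / (l.getD j 0 - μ)) •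
          (X (l.getD j 0) * Bop X v (l.eraseIdx j))) := by
  match l, hdist, hD with
  | [], _, _ => simp [Bop]
  | a :: t, hdist, hD =>
    have hpc : (∀ x ∈ t ++ [μ], a ≠ x) ∧ (t ++ [μ]).Pairwise (· ≠ ·) :=
      List.pairwise_cons.mp (by simpa using hdist)
    have hdist' := hpc.2
    have hane := hpc.1
    have haD : a ∈ D := hD a (by simp)
    have htD : ∀ ν ∈ t ++ [μ], ν ∈ D := fun ν hν => hD ν (by
      rw [List.cons_append]; exact List.mem_cons_of_mem a hν)
    have htiD : ∀ i, i < t.length → t.getD i 0 ∈ D :=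
      fun i h => htD _ (List.mem_append_left _ (getD_mem' t i h))
    have hati : ∀ i, i < t.length → a ≠ t.getD i 0 :=
      fun i h => hane _ (List.mem_append_left _ (getD_mem' t i h))
    have IH1 := Bop_aux D X v hXX hXv t μ hdist' htD
    have IH2 : ∀ i, i < t.length →
        Bop X v (t.eraseIdx i ++ [μ]) = Bop X v (t.eraseIdx i) * v μ +
          (2:ℂ) • ∑ k ∈ Finset.range (t.length - 1),
            (((-1:ℂ)^(t.length - 1 - 1 - k) / ((t.eraseIdx i).getD k 0 - μ)) •
              (X ((t.eraseIdx i).getD k 0) * Bop X v ((t.eraseIdx i).eraseIdx k))) := by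
      intro i hi
      have hsub : (t.eraseIdx i ++ [μ]).Sublist (t ++ [μ]) :=
        (List.eraseIdx_sublist t i).append (List.Sublist.refl [μ])
      have h1 := Bop_aux D X v hXX hXv (t.eraseIdx i) μ (hdist'.sublist hsub)
        (fun ν hν => htD ν (hsub.subset hν))
      rwa [List.length_eraseIdx_of_lt hi] at h1
    refine Eq.trans (b :=
      v a * (Bop X v t * v μ)
      + (2:ℂ) • ∑ j ∈ Finset.range t.length,
          (((-1:ℂ)^(t.length - 1 - j) / (t.getD j 0 - μ)) •
            (X (t.getD j 0) * (v a * Bop X v (t.eraseIdx j))))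
      + (2:ℂ) • (((-1:ℂ)^t.length / (a - μ)) • (X a * Bop X v t))
      + (2:ℂ) • ∑ i ∈ Finset.range t.length,
          (((-1:ℂ)^i / (a - t.getD i 0)) • (X a * (Bop X v (t.eraseIdx i) * v μ)))
      + (4:ℂ) • ∑ i ∈ Finset.range t.length, ∑ k ∈ Finset.range (t.length - 1),
          (((((-1:ℂ)^(t.length - 1 - i)) / (t.getD i 0 - μ)) * (((-1:ℂ)^k) / (a - (t.eraseIdx i).getD k 0))) •
            (X a * (X (t.getD i 0) * Bop X v ((t.eraseIdx i).eraseIdx k))))) ?_ ?_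
    · -- LHS = E
      rw [show (a :: t) ++ [μ] = a :: (t ++ [μ]) from rfl, Bop_cons_s3,
        show (t ++ [μ]).length = t.length + 1 by simp,
        Finset.sum_range_succ, getD_append_len, eraseIdx_append_len]
      have hs : ∑ i ∈ Finset.range t.length,
          (((-1:ℂ)^i / (a - (t ++ [μ]).getD i 0)) • Bop X v ((t ++ [μ]).eraseIdx i))
        = ∑ i ∈ Finset.range t.length,
          (((-1:ℂ)^i / (a - t.getD i 0)) •
            (Bop X v (t.eraseIdx i) * v μ + (2:ℂ) • ∑ k ∈ Finset.range (t.length - 1),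
              (((-1:ℂ)^(t.length - 1 - 1 - k) / ((t.eraseIdx i).getD k 0 - μ)) •
                (X ((t.eraseIdx i).getD k 0) * Bop X v ((t.eraseIdx i).eraseIdx k))))) := by
        refine Finset.sum_congr rfl fun i hi => ?_
        have hi' := Finset.mem_range.mp hi
        rw [getD_append_lt t [μ] i hi', List.eraseIdx_append_of_lt_length hi', IH2 i hi']
      rw [hs, IH1]
      have e1 : v a * ∑ j ∈ Finset.range t.length,
          (((-1:ℂ)^(t.length - 1 - j) / (t.getD j 0 - μ)) •
            (X (t.getD j 0) * Bop X v (t.eraseIdx j)))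
        = ∑ j ∈ Finset.range t.length,
          (((-1:ℂ)^(t.length - 1 - j) / (t.getD j 0 - μ)) •
            (X (t.getD j 0) * (v a * Bop X v (t.eraseIdx j)))) := by
        rw [Finset.mul_sum]
        refine Finset.sum_congr rfl fun j hj => ?_
        have hj' := Finset.mem_range.mp hj
        rw [mul_smul_comm, ← mul_assoc,
          ← hXv (t.getD j 0) (htiD j hj') a haD (Ne.symm (hati j hj')), mul_assoc]
      have e2 : X a * ∑ i ∈ Finset.range t.length,
          (((-1:ℂ)^i / (a - t.getD i 0)) •
            (Bop X v (t.eraseIdx i) * v μ + (2:ℂ) • ∑ k ∈ Finset.range (t.length - 1),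
              (((-1:ℂ)^(t.length - 1 - 1 - k) / ((t.eraseIdx i).getD k 0 - μ)) •
                (X ((t.eraseIdx i).getD k 0) * Bop X v ((t.eraseIdx i).eraseIdx k)))))
        = ∑ i ∈ Finset.range t.length,
            (((-1:ℂ)^i / (a - t.getD i 0)) • (X a * (Bop X v (t.eraseIdx i) * v μ)))
          + (2:ℂ) • ∑ i ∈ Finset.range t.length, ∑ k ∈ Finset.range (t.length - 1),
              (((((-1:ℂ)^i / (a - t.getD i 0))) * ((-1:ℂ)^(t.length - 1 - 1 - k) / ((t.eraseIdx i).getD k 0 - μ))) •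
                (X a * (X ((t.eraseIdx i).getD k 0) * Bop X v ((t.eraseIdx i).eraseIdx k)))) := by
        have step : ∀ i ∈ Finset.range t.length,
            X a * (((-1:ℂ)^i / (a - t.getD i 0)) •
              (Bop X v (t.eraseIdx i) * v μ + (2:ℂ) • ∑ k ∈ Finset.range (t.length - 1),
                (((-1:ℂ)^(t.length - 1 - 1 - k) / ((t.eraseIdx i).getD k 0 - μ)) •
                  (X ((t.eraseIdx i).getD k 0) * Bop X v ((t.eraseIdx i).eraseIdx k)))))
          = ((-1:ℂ)^i / (a - t.getD i 0)) • (X a * (Bop X v (t.eraseIdx i) * v μ))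
            + (2:ℂ) • ∑ k ∈ Finset.range (t.length - 1),
              (((((-1:ℂ)^i / (a - t.getD i 0))) * ((-1:ℂ)^(t.length - 1 - 1 - k) / ((t.eraseIdx i).getD k 0 - μ))) •
                (X a * (X ((t.eraseIdx i).getD k 0) * Bop X v ((t.eraseIdx i).eraseIdx k)))) := by
          intro i hi
          rw [mul_smul_comm, mul_add, smul_add]
          congr 1
          rw [mul_smul_comm (2:ℂ), smul_comm, Finset.mul_sum, Finset.smul_sum]
          congr 1
          refine Finset.sum_congr rfl fun k hk => ?_
          rw [mul_smul_comm, smul_smul]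
        rw [Finset.mul_sum, Finset.sum_congr rfl step, Finset.sum_add_distrib, ← Finset.smul_sum]
      have h4 : ∑ i ∈ Finset.range t.length, ∑ k ∈ Finset.range (t.length - 1),
              (((((-1:ℂ)^i / (a - t.getD i 0))) * ((-1:ℂ)^(t.length - 1 - 1 - k) / ((t.eraseIdx i).getD k 0 - μ))) •
                (X a * (X ((t.eraseIdx i).getD k 0) * Bop X v ((t.eraseIdx i).eraseIdx k))))
          = ∑ i ∈ Finset.range t.length, ∑ k ∈ Finset.range (t.length - 1),
          (((((-1:ℂ)^(t.length - 1 - i)) / (t.getD i 0 - μ)) * (((-1:ℂ)^k) / (a - (t.eraseIdx i).getD k 0))) •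
            (X a * (X (t.getD i 0) * Bop X v ((t.eraseIdx i).eraseIdx k)))) := by
        refine sum_invol t.length _ _ (fun i hi k hk => ?_)
        rcases lt_or_ge k i with h' | h'
        · simp only [if_pos h']
          have hE : (t.eraseIdx k).eraseIdx (i-1) = (t.eraseIdx i).eraseIdx k := by
            have := (eraseIdx_eraseIdx' t k (i-1) (by omega)).symm
            rwa [show i - 1 + 1 = i by omega] at this
          rw [getD_eraseIdx' t i k hi hk, if_pos h',
            getD_eraseIdx' t k (i-1) (by omega) (by omega), if_neg (by omega),
            show i - 1 + 1 = i by omega, hE]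
          congr 1
          rw [div_mul_div_comm, div_mul_div_comm, ← pow_add, ← pow_add,
            show i + (t.length - 1 - 1 - k) = t.length - 1 - k + (i - 1) by omega,
            mul_comm (a - t.getD i 0)]
        · have hni : ¬ (k < i) := by omega
          simp only [if_neg hni]
          have hE : (t.eraseIdx (k+1)).eraseIdx i = (t.eraseIdx i).eraseIdx k :=
            eraseIdx_eraseIdx' t i k h'
          rw [getD_eraseIdx' t i k hi hk, if_neg hni,
            getD_eraseIdx' t (k+1) i (by omega) (by omega), if_pos (by omega), hE]
          congr 1
          rw [div_mul_div_comm, div_mul_div_comm, ← pow_add, ← pow_add,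
            show i + (t.length - 1 - 1 - k) = t.length - 1 - (k+1) + i by omega,
            mul_comm (a - t.getD i 0)]
      rw [mul_add (v a) (Bop X v t * v μ), mul_smul_comm (2:ℂ) (v a), e1,
        mul_add (X a), e2, h4,
        mul_smul_comm ((-1:ℂ)^t.length / (a - μ)) (X a) (Bop X v t)]
      module
    · -- E = RHS
      symm
      have hlen : (a :: t).length = t.length + 1 := rfl
      simp only [hlen, Nat.add_sub_cancel]
      rw [Finset.sum_range_succ']
      simp only [List.getD_cons_zero, List.getD_cons_succ, List.eraseIdx_cons_succ,
        List.eraseIdx_cons_zero, Nat.sub_zero]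
      have r1 : ∑ i ∈ Finset.range t.length,
          (((-1:ℂ)^(t.length - (i+1)) / (t.getD i 0 - μ)) •
            (X (t.getD i 0) * Bop X v (a :: t.eraseIdx i)))
        = ∑ j ∈ Finset.range t.length,
          (((-1:ℂ)^(t.length - 1 - j) / (t.getD j 0 - μ)) •
            (X (t.getD j 0) * (v a * Bop X v (t.eraseIdx j))))
          + (2:ℂ) • ∑ i ∈ Finset.range t.length, ∑ k ∈ Finset.range (t.length - 1),
          (((((-1:ℂ)^(t.length - 1 - i)) / (t.getD i 0 - μ)) * (((-1:ℂ)^k) / (a - (t.eraseIdx i).getD k 0))) •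
            (X a * (X (t.getD i 0) * Bop X v ((t.eraseIdx i).eraseIdx k)))) := by
        have step : ∀ i ∈ Finset.range t.length,
            ((-1:ℂ)^(t.length - (i+1)) / (t.getD i 0 - μ)) •
              (X (t.getD i 0) * Bop X v (a :: t.eraseIdx i))
          = ((-1:ℂ)^(t.length - 1 - i) / (t.getD i 0 - μ)) •
              (X (t.getD i 0) * (v a * Bop X v (t.eraseIdx i)))
            + (2:ℂ) • ∑ k ∈ Finset.range (t.length - 1),
          (((((-1:ℂ)^(t.length - 1 - i)) / (t.getD i 0 - μ)) * (((-1:ℂ)^k) / (a - (t.eraseIdx i).getD k 0))) •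
            (X a * (X (t.getD i 0) * Bop X v ((t.eraseIdx i).eraseIdx k)))) := by
          intro i hi
          have hi' := Finset.mem_range.mp hi
          rw [Bop_cons_s3 X v a (t.eraseIdx i), List.length_eraseIdx_of_lt hi',
            show t.length - (i+1) = t.length - 1 - i by omega,
            mul_add (X (t.getD i 0)), smul_add]
          congr 1
          rw [mul_smul_comm (2:ℂ) (X (t.getD i 0)), smul_comm, Finset.mul_sum, Finset.mul_sum,
            Finset.smul_sum]
          congr 1
          refine Finset.sum_congr rfl fun k hk => ?_
          rw [mul_smul_comm, mul_smul_comm, smul_smul, ← mul_assoc,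
            hXX (t.getD i 0) (htiD i hi') a haD (Ne.symm (hati i hi')), mul_assoc]
        rw [Finset.sum_congr rfl step, Finset.sum_add_distrib, ← Finset.smul_sum]
      have r2 : Bop X v (a :: t) * v μ = v a * (Bop X v t * v μ)
          + (2:ℂ) • ∑ i ∈ Finset.range t.length,
          (((-1:ℂ)^i / (a - t.getD i 0)) • (X a * (Bop X v (t.eraseIdx i) * v μ))) := by
        rw [Bop_cons_s3, add_mul, mul_assoc, smul_mul_assoc]
        congr 2
        rw [Finset.mul_sum, Finset.sum_mul]
        refine Finset.sum_congr rfl fun i hi => ?_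
        rw [mul_smul_comm, smul_mul_assoc, mul_assoc]
      rw [r1, r2]
      module
termination_by l.length
decreasing_by
  all_goals simp only [List.length_cons, List.length_eraseIdx]
  all_goals (first | omega | (split <;> omega))

/-- the alternative (right-sided) recurrence relation for the
creation operators. -/
theorem Bop_right_recurrence {A : Type*} [Ring A] [Algebra ℂ A] (D : Set ℂ)
    (X v : ℂ → A)
    (hXX : ∀ l ∈ D, ∀ m ∈ D, l ≠ m → X l * X m = X m * X l)
    (hXv : ∀ l ∈ D, ∀ m ∈ D, l ≠ m → X l * v m = v m * X l)
    (hvv : ∀ l ∈ D, ∀ m ∈ D, l ≠ m →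
      v l * v m + v m * v l = (-2/(l - m)) • (X l - X m))
    (l : List ℂ) (μ : ℂ)
    (hdist : (l ++ [μ]).Pairwise (· ≠ ·))
    (hD : ∀ ν ∈ l ++ [μ], ν ∈ D) :
    Bop X v (l ++ [μ]) = Bop X v l * v μ +
      (2:ℂ) • ∑ j : Fin l.length,
        (((-1:ℂ)^(l.length - 1 - (j:ℕ)) / (l.get j - μ)) •
          (X (l.get j) * Bop X v (l.eraseIdx (j:ℕ)))) := by
  rw [Bop_aux D X v hXX hXv l μ hdist hD]
  have hsum : ∑ j : Fin l.length,
      (((-1:ℂ)^(l.length - 1 - (j:ℕ)) / (l.get j - μ)) •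
        (X (l.get j) * Bop X v (l.eraseIdx (j:ℕ))))
    = ∑ j ∈ Finset.range l.length,
      (((-1:ℂ)^(l.length - 1 - j) / (l.getD j 0 - μ)) •
        (X (l.getD j 0) * Bop X v (l.eraseIdx j))) := by
    rw [← Fin.sum_univ_eq_sum_range (fun j =>
      (((-1:ℂ)^(l.length - 1 - j) / (l.getD j 0 - μ)) •
        (X (l.getD j 0) * Bop X v (l.eraseIdx j))))]
    refine Finset.sum_congr rfl fun j _ => ?_
    rw [List.getD_eq_getElem _ _ j.isLt, List.get_eq_getElem]
  rw [hsum]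
end
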